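/- arXiv:1708.07795 — 6 statements merged into one kernel-verified Lean document; each statement's English description precedes it below -/
import Mathlib

section
/- Let α be a real number with α ≠ 1/2 and let A₂ be the 3×3 matrix with rows [(1-α)², 2α(1-α), α²], [α(1-α), (1-α)²+α², α(1-α)], [α², 2α(1-α), (1-α)²]. Then A₂ is invertible and its inverse is (1/(1-2α)²) times the matrix with entries (-1)^(i+j)·A₂(i,j). -/
/-!
`A₂` is the symmetric square of the one-channel flip matrix `[[1-α, α], [α, 1-α]]`, whose
inverse is `(1-2α)⁻¹ [[1-α, -α], [-α, 1-α]]`. The symmetric square of the latter is `A₂` with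
checkerboard signs, so `A₂ * checkerboard A₂ = (1-2α)² • 1`.
-/

namespace Matrix

variable {R : Type*} [CommRing R]

def channelFlipTwo (α : R) : Matrix (Fin 3) (Fin 3) R :=
  !![(1-α)^2, 2*α*(1-α), α^2;
     α*(1-α), (1-α)^2 + α^2, α*(1-α);
     α^2, 2*α*(1-α), (1-α)^2]

def checkerboard {n : ℕ} (A : Matrix (Fin n) (Fin n) R) : Matrix (Fin n) (Fin n) R :=
  of fun i j => (-1 : R) ^ ((i : ℕ) + (j : ℕ)) * A i j

theorem channelFlipTwo_mul_checkerboard (α : R) :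
    channelFlipTwo α * checkerboard (channelFlipTwo α) = (1 - 2*α)^2 • (1 : Matrix _ _ R) := by
  ext i j
  fin_cases i <;> fin_cases j <;>
    simp [channelFlipTwo, checkerboard, mul_apply, Fin.sum_univ_succ] <;> ring

theorem isUnit_and_inv_eq_of_mul_eq_smul_one {K n : Type*} [Field K] [Fintype n] [DecidableEq n]
    {A B : Matrix n n K} {c : K} (hc : c ≠ 0) (h : A * B = c • 1) :
    IsUnit A ∧ A⁻¹ = c⁻¹ • B := by
  have hright : A * (c⁻¹ • B) = 1 := by
    rw [mul_smul_comm, h, smul_smul, inv_mul_cancel₀ hc, one_smul]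
  exact ⟨(isUnit_iff_isUnit_det A).mpr (isUnit_det_of_right_inverse hright),
    inv_eq_right_inv hright⟩

end Matrix

theorem stmt_1 (α : ℝ) (hα : α ≠ 1/2) :
    let A : Matrix (Fin 3) (Fin 3) ℝ :=
      !![(1-α)^2, 2*α*(1-α), α^2;
         α*(1-α), (1-α)^2 + α^2, α*(1-α);
         α^2, 2*α*(1-α), (1-α)^2]
    IsUnit A ∧
      A⁻¹ = (1/(1-2*α)^2) • Matrix.of (fun i j : Fin 3 => (-1 : ℝ) ^ ((i : ℕ) + (j : ℕ)) * A i j) := by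
  have hc : (1 - 2*α)^2 ≠ 0 := pow_ne_zero 2 (by contrapose! hα; linarith)
  rw [one_div]
  exact Matrix.isUnit_and_inv_eq_of_mul_eq_smul_one hc (Matrix.channelFlipTwo_mul_checkerboard α)
end

section
/- With Aₙ defined as the (n+1)×(n+1) matrix Aₙ(i,j) = ∑_{s=max(i-j,0)}^{min(n+1-j, i-1)} C(i-1, s)·C(n+1-i, j-i+s)·α^{j-i+2s}·(1-α)^{n-(j-i+2s)} for real α, let Aₙ* be the matrix with entries Aₙ*(i,j) = (-1)^{i+j}·Aₙ(i,j). Then Aₙ · Aₙ* = (1-2α)^n · I, where I is the (n+1)×(n+1) identity matrix. -/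
noncomputable def Amat (n : ℕ) (α : ℝ) : Matrix (Fin (n+1)) (Fin (n+1)) ℝ :=
  Matrix.of fun i j =>
    ∑ s ∈ Finset.Icc ((i : ℕ) - (j : ℕ)) (min (n - (j : ℕ)) (i : ℕ)),
      ((i : ℕ).choose s : ℝ) * ((n - (i : ℕ)).choose ((j : ℕ) + s - (i : ℕ)) : ℝ) *
        α ^ ((j : ℕ) + 2 * s - (i : ℕ)) * (1 - α) ^ (n - ((j : ℕ) + 2 * s - (i : ℕ)))

/-!
`Aₙ` is the matrix of the `n`-th symmetric power of `M = [[1-α, α], [α, 1-α]]` acting on binary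
forms of degree `n`: row `i` lists the coefficients of `((1-α) x + α y)^i (α x + (1-α) y)^(n-i)`.
Taking symmetric powers is multiplicative, because substituting linear forms into a product of
linear forms gives the product of the composed forms. The signs `(-1)^(i+j)` amount to conjugating
by the symmetric power of `D = diag(-1, 1)`, so `Aₙ Aₙ*` is the symmetric power of
`M D M D = (1 - 2α) I`, which is `(1 - 2α)^n I`.
-/

open Polynomial Finset

namespace Polynomial

variable {R : Type*} [CommSemiring R]

noncomputable def linearPoly (v : Fin 2 → R) : R[X] := C (v 0) * X + C (v 1)

lemma coeff_linearPoly_pow (v : Fin 2 → R) (m k : ℕ) :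
    (linearPoly v ^ m).coeff k = v 0 ^ k * v 1 ^ (m - k) * m.choose k := by
  have hterm : ∀ x, (C (v 0) * X) ^ x * C (v 1) ^ (m - x) * (m.choose x : R[X]) =
      C (v 0 ^ x * v 1 ^ (m - x) * m.choose x) * X ^ x := fun x => by
    rw [mul_pow, ← C_pow, ← C_pow, ← C_eq_natCast, C_mul, C_mul]; ring
  simp_rw [linearPoly, add_pow, finsetSum_coeff, hterm, coeff_C_mul_X_pow, sum_ite_eq, mem_range]
  split_ifs with h
  · rfl
  · rw [Nat.choose_eq_zero_of_lt (by omega)]; simp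

lemma homogenize_eq_sum_range (p : R[X]) (n : ℕ) :
    p.homogenize n = ∑ j ∈ range (n + 1),
      MvPolynomial.C (p.coeff j) * MvPolynomial.X 0 ^ j * MvPolynomial.X 1 ^ (n - j) := by
  rw [homogenize, Finset.Nat.sum_antidiagonal_eq_sum_range_succ_mk]
  refine sum_congr rfl fun j _ => ?_
  simp [MvPolynomial.monomial_eq, Finsupp.prod_fintype, mul_assoc]

end Polynomial

namespace Matrix

section SymPow

variable {R : Type*} [CommSemiring R]

/-- The binary form `(M₀₀ x + M₀₁ y)^i (M₁₀ x + M₁₁ y)^(n-i)`, dehomogenized at `y = 1`. -/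
noncomputable def symPowRow (n : ℕ) (M : Matrix (Fin 2) (Fin 2) R) (i : ℕ) : R[X] :=
  linearPoly (M 0) ^ i * linearPoly (M 1) ^ (n - i)

noncomputable def symPow (n : ℕ) (M : Matrix (Fin 2) (Fin 2) R) :
    Matrix (Fin (n + 1)) (Fin (n + 1)) R :=
  of fun i j => (symPowRow n M i).coeff j

@[simp]
lemma symPow_apply (n : ℕ) (M : Matrix (Fin 2) (Fin 2) R) (i j : Fin (n + 1)) :
    symPow n M i j = (symPowRow n M i).coeff j :=
  rfl

lemma coeff_symPowRow (n : ℕ) (M : Matrix (Fin 2) (Fin 2) R) (i j : ℕ) :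
    (symPowRow n M i).coeff j = ∑ x ∈ range (j + 1),
      M 0 0 ^ x * M 0 1 ^ (i - x) * i.choose x *
        (M 1 0 ^ (j - x) * M 1 1 ^ (n - i - (j - x)) * (n - i).choose (j - x)) := by
  rw [symPowRow, coeff_mul, Finset.Nat.sum_antidiagonal_eq_sum_range_succ_mk]
  simp only [coeff_linearPoly_pow]

lemma homogenize_symPowRow {n i : ℕ} (hi : i ≤ n) (M : Matrix (Fin 2) (Fin 2) R) :
    (symPowRow n M i).homogenize n =
      (∑ t, MvPolynomial.C (M 0 t) * MvPolynomial.X t) ^ i *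
        (∑ t, MvPolynomial.C (M 1 t) * MvPolynomial.X t) ^ (n - i) := by
  have hlin : ∀ r, (∑ t, MvPolynomial.C (M r t) * MvPolynomial.X t :
      MvPolynomial (Fin 2) R).IsHomogeneous 1 := fun r =>
    MvPolynomial.IsHomogeneous.sum _ _ _ fun t _ => MvPolynomial.isHomogeneous_C_mul_X _ _
  apply homogenize_eq_of_isHomogeneous
  · convert ((hlin 0).pow i).mul ((hlin 1).pow (n - i)) using 1
    omega
  · simp [symPowRow, linearPoly, Fin.sum_univ_two]

lemma sum_C_coeff_mul_symPowRow {n i : ℕ} (hi : i ≤ n) (M N : Matrix (Fin 2) (Fin 2) R) :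
    ∑ j : Fin (n + 1), C ((symPowRow n M i).coeff j) * symPowRow n N j =
      symPowRow n (M * N) i := by
  let g : Fin 2 → R[X] := fun s => linearPoly (N s)
  have hrow : ∀ r, MvPolynomial.aeval g (∑ t, MvPolynomial.C (M r t) * MvPolynomial.X t) =
      linearPoly ((M * N) r) := fun r => by
    simp [g, linearPoly, Fin.sum_univ_two, mul_apply]
    ring
  calc ∑ j : Fin (n + 1), C ((symPowRow n M i).coeff j) * symPowRow n N j
      = MvPolynomial.aeval g ((symPowRow n M i).homogenize n) := by
        rw [homogenize_eq_sum_range, map_sum, ← Fin.sum_univ_eq_sum_range]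
        simp [g, symPowRow, mul_assoc]
    _ = symPowRow n (M * N) i := by
        rw [homogenize_symPowRow hi, map_mul, map_pow, map_pow, hrow, hrow, symPowRow]

theorem symPow_mul (n : ℕ) (M N : Matrix (Fin 2) (Fin 2) R) :
    symPow n M * symPow n N = symPow n (M * N) := by
  ext i k
  rw [mul_apply, symPow_apply, ← sum_C_coeff_mul_symPowRow (Nat.le_of_lt_succ i.isLt),
    finsetSum_coeff]
  simp only [symPow_apply, coeff_C_mul]

theorem symPow_diagonal (n : ℕ) (d : Fin 2 → R) :
    symPow n (diagonal d) = diagonal fun i : Fin (n + 1) => d 0 ^ (i : ℕ) * d 1 ^ (n - i) := by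
  ext i j
  have hrow : symPowRow n (diagonal d) i = C (d 0 ^ (i : ℕ) * d 1 ^ (n - i)) * X ^ (i : ℕ) := by
    simp [symPowRow, linearPoly]
    ring
  rw [symPow_apply, hrow, coeff_C_mul_X_pow, diagonal_apply]
  simp [eq_comm, Fin.val_inj]

theorem symPow_smul_one (n : ℕ) (c : R) :
    symPow n (c • 1) = c ^ n • (1 : Matrix (Fin (n + 1)) (Fin (n + 1)) R) := by
  rw [smul_one_eq_diagonal, symPow_diagonal, smul_one_eq_diagonal]
  congr with i
  rw [← pow_add, Nat.add_sub_cancel' (Nat.le_of_lt_succ i.isLt)]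

end SymPow

lemma of_neg_one_pow_mul_eq_diagonal_mul_diagonal {R : Type*} [CommRing R] {m : ℕ}
    (A : Matrix (Fin m) (Fin m) R) :
    of (fun i j : Fin m => (-1 : R) ^ ((i : ℕ) + j) * A i j) =
      diagonal (fun i : Fin m => (-1) ^ (i : ℕ)) * A *
        diagonal (fun i : Fin m => (-1) ^ (i : ℕ)) := by
  ext i j
  simp [pow_add]
  ring

end Matrix

lemma Amat_eq_symPow (n : ℕ) (α : ℝ) : Amat n α = Matrix.symPow n !![1 - α, α; α, 1 - α] := by
  ext ⟨i, hi⟩ ⟨j, hj⟩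
  rw [Matrix.symPow_apply, Matrix.coeff_symPowRow]
  simp only [Amat, Matrix.of_apply, Matrix.cons_val', Matrix.cons_val_zero, Matrix.cons_val_one,
    Matrix.empty_val', Matrix.cons_val_fin_one]
  -- `s ↦ i - s` matches the terms of `Amat` with the nonzero terms of the coefficient sum.
  refine sum_of_injOn (fun s => i - s) ?_ ?_ ?_ ?_
  · intro s hs t ht hst
    simp only [coe_Icc, Set.mem_Icc] at hs ht hst
    omega
  · intro s hs
    simp only [coe_Icc, Set.mem_Icc, coe_range, Set.mem_Iio] at hs ⊢
    omega
  · intro x hx hx'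
    simp only [coe_Icc, Set.mem_image, Set.mem_Icc, not_exists, not_and, mem_range] at hx hx'
    rcases lt_or_ge i x with hix | hxi
    · simp [Nat.choose_eq_zero_of_lt hix]
    · have : n - i < j - x := by specialize hx' (i - x); omega
      simp [Nat.choose_eq_zero_of_lt this]
  · intro s hs
    simp only [mem_Icc] at hs
    rw [Nat.sub_sub_self (by omega), Nat.choose_symm (by omega),
      show j - (i - s) = j + s - i by omega, show j + 2 * s - i = s + (j + s - i) by omega,
      show n - (s + (j + s - i)) = (i - s) + (n - i - (j + s - i)) by omega, pow_add, pow_add]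
    ring

theorem stmt_5 (n : ℕ) (α : ℝ) :
    Amat n α * (Matrix.of fun i j : Fin (n+1) => (-1 : ℝ) ^ ((i : ℕ) + (j : ℕ)) * Amat n α i j)
      = (1 - 2*α)^n • (1 : Matrix (Fin (n+1)) (Fin (n+1)) ℝ) := by
  set M : Matrix (Fin 2) (Fin 2) ℝ := !![1 - α, α; α, 1 - α]
  set D : Matrix (Fin 2) (Fin 2) ℝ := Matrix.diagonal ![-1, 1]
  have hA : Amat n α = Matrix.symPow n M := Amat_eq_symPow n α
  have hD : Matrix.symPow n D = Matrix.diagonal fun i : Fin (n + 1) => (-1) ^ (i : ℕ) := by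
    simp [D, Matrix.symPow_diagonal]
  have hMDMD : M * (D * M * D) = (1 - 2 * α) • 1 := by
    simp only [M, D, Matrix.diagonal_fin_two, Matrix.mul_fin_two, Matrix.smul_one_eq_diagonal]
    ext i j; fin_cases i <;> fin_cases j <;> simp <;> ring
  rw [Matrix.of_neg_one_pow_mul_eq_diagonal_mul_diagonal, hA, ← hD, Matrix.symPow_mul,
    Matrix.symPow_mul, Matrix.symPow_mul, hMDMD, Matrix.symPow_smul_one]
end

section
/- The diagonal entries of the product Aₙ·Aₙ*, where Aₙ*(k,j) = (-1)^{k+j} Aₙ(k,j), all equal ∑_{t=0}^{n} C(n,t)·(-1)^t·α^{2t}·(1-α)^{2(n-t)} = (1-2α)^n. -/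
open Finset

/-- The per-string weight: probability that a flip pattern turns `x` into `y`. -/
noncomputable def Mw (n : ℕ) (α : ℝ) (x y : Finset (Fin n)) : ℝ :=
  α ^ ((symmDiff x y).card) * (1 - α) ^ (n - (symmDiff x y).card)

lemma sum_all_eq_pair {n : ℕ} (x : Finset (Fin n)) (f : Finset (Fin n) → ℝ) :
    ∑ y : Finset (Fin n), f y = ∑ p ∈ x.powerset ×ˢ xᶜ.powerset, f (p.1 ∪ p.2) := by
  refine (Finset.sum_bij' (fun (p : Finset (Fin n) × Finset (Fin n)) (_ : p ∈ x.powerset ×ˢ xᶜ.powerset) => p.1 ∪ p.2)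
    (fun y _ => (y ∩ x, y \ x)) ?_ ?_ ?_ ?_ ?_).symm
  · intro a ha; exact Finset.mem_univ _
  · intro y _
    simp only [Finset.mem_product, Finset.mem_powerset]
    exact ⟨Finset.inter_subset_right, fun c hc => by
      simp only [Finset.mem_compl]; exact (Finset.mem_sdiff.mp hc).2⟩
  · intro p hp
    simp only [Finset.mem_product, Finset.mem_powerset] at hp
    obtain ⟨h1, h2⟩ := hp
    have hd : ∀ c ∈ p.2, c ∉ x := fun c hc => Finset.mem_compl.mp (h2 hc)
    ext1
    · ext c; simp only [Finset.mem_inter, Finset.mem_union]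
      constructor
      · rintro ⟨h | h, hx⟩
        · exact h
        · exact absurd hx (hd c h)
      · intro h; exact ⟨Or.inl h, h1 h⟩
    · ext c; simp only [Finset.mem_sdiff, Finset.mem_union]
      constructor
      · rintro ⟨h | h, hx⟩
        · exact absurd (h1 h) hx
        · exact h
      · intro h; exact ⟨Or.inr h, hd c h⟩
  · intro y _
    ext c; simp only [Finset.mem_union, Finset.mem_inter, Finset.mem_sdiff]; tauto
  · intro y _; rfl

lemma card_symmDiff_union {n : ℕ} {x A B : Finset (Fin n)} (hA : A ⊆ x) (hB : B ⊆ xᶜ) :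
    (symmDiff x (A ∪ B)).card = (x.card - A.card) + B.card := by
  have hBx : ∀ c ∈ B, c ∉ x := fun c hc => Finset.mem_compl.mp (hB hc)
  have h1 : symmDiff x (A ∪ B) = (x \ A) ∪ B := by
    ext c
    simp only [Finset.mem_symmDiff, Finset.mem_union, Finset.mem_sdiff]
    constructor
    · rintro (⟨hx, h⟩ | ⟨h | h, hx⟩)
      · exact Or.inl ⟨hx, fun hc => h (Or.inl hc)⟩
      · exact absurd (hA h) hx
      · exact Or.inr h
    · rintro (⟨hx, hc⟩ | h)
      · exact Or.inl ⟨hx, fun hh => by rcases hh with h | h; exact hc h; exact hBx c h hx⟩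
      · exact Or.inr ⟨Or.inr h, hBx c h⟩
  rw [h1, Finset.card_union_of_disjoint, Finset.card_sdiff_of_subset hA]
  exact Finset.disjoint_left.mpr fun c hc hcB => hBx c hcB (Finset.mem_sdiff.mp hc).1

lemma sum_powerset_card {n : ℕ} (x : Finset (Fin n)) (g : ℕ → ℝ) :
    ∑ A ∈ x.powerset, g A.card = ∑ a ∈ Finset.range (x.card + 1), (x.card.choose a : ℝ) * g a := by
  rw [Finset.sum_powerset]
  refine Finset.sum_congr rfl fun a _ => ?_
  have h1 : ∀ A ∈ Finset.powersetCard a x, g A.card = g a := fun A hA => by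
    rw [(Finset.mem_powersetCard.mp hA).2]
  rw [Finset.sum_congr rfl h1, Finset.sum_const, Finset.card_powersetCard, nsmul_eq_mul]

lemma innerSumAux (m j a : ℕ) (h : ℕ → ℝ) :
    ∑ b ∈ Finset.range (m+1), (m.choose b : ℝ) * (if a + b = j then h b else 0)
      = if a ≤ j then (m.choose (j-a) : ℝ) * h (j-a) else 0 := by
  by_cases haj : a ≤ j
  · simp only [haj, if_true]
    by_cases hm : j - a ≤ m
    · rw [Finset.sum_eq_single_of_mem (j-a) (Finset.mem_range.mpr (by omega))]
      · rw [if_pos (by omega)]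
      · intro b _ hb
        rw [if_neg (by omega), mul_zero]
    · rw [Nat.choose_eq_zero_of_lt (by omega), Finset.sum_eq_zero, Nat.cast_zero, zero_mul]
      intro b hb
      rw [if_neg (by simp only [Finset.mem_range] at hb; omega), mul_zero]
  · rw [if_neg haj, Finset.sum_eq_zero]
    intro b _
    rw [if_neg (by omega), mul_zero]

lemma amat_entry {n : ℕ} (α : ℝ) (i j : Fin (n+1)) (x : Finset (Fin n)) (hx : x.card = (i:ℕ)) :
    Amat n α i j = ∑ y : Finset (Fin n), if y.card = (j : ℕ) then Mw n α x y else 0 := by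
  have hi : (i : ℕ) ≤ n := Nat.lt_succ_iff.mp i.isLt
  have hj : (j : ℕ) ≤ n := Nat.lt_succ_iff.mp j.isLt
  have hxc : xᶜ.card = n - (i : ℕ) := by
    rw [Finset.card_compl, hx, Fintype.card_fin]
  have hR : (∑ y : Finset (Fin n), if y.card = (j : ℕ) then Mw n α x y else 0)
      = ∑ a ∈ Finset.range ((i:ℕ) + 1), ((i:ℕ).choose a : ℝ) *
          (if a ≤ (j:ℕ) then (((n - (i:ℕ)).choose ((j:ℕ)-a)) : ℝ) *
            (α ^ (((i:ℕ) - a) + ((j:ℕ)-a)) * (1-α) ^ (n - (((i:ℕ) - a) + ((j:ℕ)-a)))) else 0) := by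
    rw [sum_all_eq_pair x, Finset.sum_product]
    have step1 : ∀ A ∈ x.powerset, ∀ B ∈ xᶜ.powerset,
        (if (A ∪ B).card = (j:ℕ) then Mw n α x (A ∪ B) else 0)
        = (if A.card + B.card = (j:ℕ) then
            α ^ ((x.card - A.card) + B.card) * (1-α) ^ (n - ((x.card - A.card) + B.card)) else 0) := by
      intro A hA B hB
      rw [Finset.mem_powerset] at hA hB
      have hd : Disjoint A B := Finset.disjoint_left.mpr fun c hc hcB =>
        (Finset.mem_compl.mp (hB hcB)) (hA hc)
      rw [Finset.card_union_of_disjoint hd, Mw, card_symmDiff_union hA hB]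
    rw [Finset.sum_congr rfl (fun A hA => Finset.sum_congr rfl (fun B hB => step1 A hA B hB))]
    have step2 : ∀ A ∈ x.powerset,
        (∑ B ∈ xᶜ.powerset, if A.card + B.card = (j:ℕ) then
            α ^ ((x.card - A.card) + B.card) * (1-α) ^ (n - ((x.card - A.card) + B.card)) else 0)
        = ∑ b ∈ Finset.range ((n - (i:ℕ)) + 1), (((n-(i:ℕ)).choose b : ℝ)) *
            (if A.card + b = (j:ℕ) then
              α ^ ((x.card - A.card) + b) * (1-α) ^ (n - ((x.card - A.card) + b)) else 0) := by
      intro A hA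
      rw [← hxc]
      exact sum_powerset_card xᶜ (fun b => if A.card + b = (j:ℕ) then
        α ^ ((x.card - A.card) + b) * (1-α) ^ (n - ((x.card - A.card) + b)) else 0)
    rw [Finset.sum_congr rfl step2]
    have step3 : ∀ A ∈ x.powerset,
        (∑ b ∈ Finset.range ((n - (i:ℕ)) + 1), (((n-(i:ℕ)).choose b : ℝ)) *
            (if A.card + b = (j:ℕ) then
              α ^ ((x.card - A.card) + b) * (1-α) ^ (n - ((x.card - A.card) + b)) else 0))
        = (if A.card ≤ (j:ℕ) then (((n - (i:ℕ)).choose ((j:ℕ)-A.card)) : ℝ) *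
            (α ^ ((x.card - A.card) + ((j:ℕ)-A.card)) * (1-α) ^ (n - ((x.card - A.card) + ((j:ℕ)-A.card)))) else 0) := by
      intro A _
      exact innerSumAux (n - (i:ℕ)) (j:ℕ) A.card _
    rw [Finset.sum_congr rfl step3]
    have := sum_powerset_card x (fun a => if a ≤ (j:ℕ) then (((n - (i:ℕ)).choose ((j:ℕ)-a)) : ℝ) *
            (α ^ ((x.card - a) + ((j:ℕ)-a)) * (1-α) ^ (n - ((x.card - a) + ((j:ℕ)-a)))) else 0)
    rw [this, hx]
  rw [hR]
  show (∑ s ∈ Finset.Icc ((i : ℕ) - (j : ℕ)) (min (n - (j : ℕ)) (i : ℕ)),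
      ((i : ℕ).choose s : ℝ) * ((n - (i : ℕ)).choose ((j : ℕ) + s - (i : ℕ)) : ℝ) *
        α ^ ((j : ℕ) + 2 * s - (i : ℕ)) * (1 - α) ^ (n - ((j : ℕ) + 2 * s - (i : ℕ)))) = _
  rw [Finset.sum_subset (Finset.Icc_subset_Icc_right (min_le_right _ _))
    (by
      intro s hs hns
      simp only [Finset.mem_Icc] at hs hns
      have : n - (j:ℕ) < s := by omega
      rw [Nat.choose_eq_zero_of_lt (show n - (i:ℕ) < (j:ℕ) + s - (i:ℕ) by omega)]
      simp)]
  have hIcc : Finset.Icc ((i:ℕ) - (j:ℕ)) (i:ℕ)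
      = (Finset.range ((i:ℕ)+1)).filter (fun s => (i:ℕ) - (j:ℕ) ≤ s) := by
    ext s; simp only [Finset.mem_Icc, Finset.mem_filter, Finset.mem_range]; omega
  rw [hIcc, Finset.sum_filter]
  rw [← Finset.sum_range_reflect]
  refine Finset.sum_congr rfl fun s hs => ?_
  rw [Finset.mem_range] at hs
  have hsi : s ≤ (i:ℕ) := by omega
  have hrefl : (i:ℕ) + 1 - 1 - s = (i:ℕ) - s := by omega
  rw [hrefl]
  by_cases hcond : s ≤ (j:ℕ)
  · rw [if_pos (by omega : (i:ℕ) - (j:ℕ) ≤ (i:ℕ) - s), if_pos hcond]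
    have e1 : (i:ℕ).choose ((i:ℕ)-s) = (i:ℕ).choose s := Nat.choose_symm hsi
    have e2 : (j:ℕ) + ((i:ℕ)-s) - (i:ℕ) = (j:ℕ) - s := by omega
    have e3 : (j:ℕ) + 2*((i:ℕ)-s) - (i:ℕ) = (i:ℕ) - s + ((j:ℕ) - s) := by omega
    rw [e1, e2, e3]
    ring
  · rw [if_neg (by omega), if_neg hcond, mul_zero]

lemma Mw_prod {n : ℕ} (α : ℝ) (x y : Finset (Fin n)) :
    Mw n α x y = ∏ c : Fin n, (if (c ∈ x) = (c ∈ y) then (1-α) else α) := by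
  rw [← Finset.prod_filter_mul_prod_filter_not Finset.univ (fun c => (c ∈ x) = (c ∈ y))]
  have h1 : Finset.univ.filter (fun c => (c ∈ x) = (c ∈ y)) = (symmDiff x y)ᶜ := by
    ext c
    simp only [Finset.mem_filter, Finset.mem_univ, true_and, Finset.mem_compl,
      Finset.mem_symmDiff, eq_iff_iff]
    tauto
  have h2 : Finset.univ.filter (fun c => ¬ (c ∈ x) = (c ∈ y)) = symmDiff x y := by
    ext c
    simp only [Finset.mem_filter, Finset.mem_univ, true_and, Finset.mem_symmDiff, eq_iff_iff]
    tauto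
  rw [h1, h2]
  rw [Finset.prod_congr rfl (fun c hc => if_pos (by
    have := Finset.mem_compl.mp hc
    simp only [Finset.mem_symmDiff, eq_iff_iff] at this ⊢
    tauto)),
    Finset.prod_congr rfl (fun c hc => if_neg (by
    simp only [Finset.mem_symmDiff, eq_iff_iff] at hc ⊢
    tauto))]
  rw [Finset.prod_const, Finset.prod_const, Finset.card_compl, Fintype.card_fin, Mw, mul_comm]

lemma sign_prod {n : ℕ} (y : Finset (Fin n)) :
    (-1:ℝ)^y.card = ∏ c : Fin n, (if c ∈ y then (-1:ℝ) else 1) := by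
  rw [← Finset.prod_filter_mul_prod_filter_not Finset.univ (fun c => c ∈ y)]
  have h1 : Finset.univ.filter (fun c => c ∈ y) = y := by ext c; simp
  rw [h1, Finset.prod_congr rfl (fun c hc => if_pos hc),
    Finset.prod_congr (rfl : Finset.univ.filter (fun c => ¬ c ∈ y) = _)
      (fun c hc => if_neg (Finset.mem_filter.mp hc).2),
    Finset.prod_const, Finset.prod_const, one_pow, mul_one]

lemma lemB {n : ℕ} (α : ℝ) (x z : Finset (Fin n)) :
    ∑ y : Finset (Fin n), (-1:ℝ)^(x.card + y.card) * Mw n α x y * Mw n α y z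
      = if z = x then (1-2*α)^n else 0 := by
  set F : Fin n → ℝ := fun c => (-1) * (if c ∈ x then 1-α else α) * (if c ∈ z then 1-α else α) with hF
  set G : Fin n → ℝ := fun c => (if c ∈ x then α else 1-α) * (if c ∈ z then α else 1-α) with hG
  have step1 : ∀ y : Finset (Fin n),
      (-1:ℝ)^(x.card + y.card) * Mw n α x y * Mw n α y z
      = (-1:ℝ)^x.card * ((∏ c ∈ y, F c) * ∏ c ∈ Finset.univ \ y, G c) := by
    intro y
    rw [pow_add, Mw_prod, Mw_prod, sign_prod y]
    have comb : (∏ c : Fin n, (if c ∈ y then (-1:ℝ) else 1))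
        * (∏ c : Fin n, (if (c ∈ x) = (c ∈ y) then (1-α) else α))
        * (∏ c : Fin n, (if (c ∈ y) = (c ∈ z) then (1-α) else α))
        = ∏ c : Fin n, (if c ∈ y then F c else G c) := by
      rw [← Finset.prod_mul_distrib, ← Finset.prod_mul_distrib]
      refine Finset.prod_congr rfl fun c _ => ?_
      by_cases h1 : c ∈ x <;> by_cases h2 : c ∈ y <;> by_cases h3 : c ∈ z <;>
        simp [hF, hG, h1, h2, h3] <;> ring
    have split : (∏ c : Fin n, (if c ∈ y then F c else G c))
        = (∏ c ∈ y, F c) * ∏ c ∈ Finset.univ \ y, G c := by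
      rw [← Finset.prod_filter_mul_prod_filter_not Finset.univ (fun c => c ∈ y)]
      have h1 : Finset.univ.filter (fun c => c ∈ y) = y := by ext c; simp
      have h2 : Finset.univ.filter (fun c => ¬ c ∈ y) = Finset.univ \ y := by ext c; simp
      rw [Finset.prod_congr h1 (fun c hc => if_pos hc),
        Finset.prod_congr h2 (fun c hc => if_neg (Finset.mem_sdiff.mp hc).2)]
    rw [← split, ← comb]
    ring
  rw [Finset.sum_congr rfl (fun y _ => step1 y), ← Finset.mul_sum]
  have hps : ∑ y : Finset (Fin n), (∏ c ∈ y, F c) * ∏ c ∈ Finset.univ \ y, G c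
      = ∏ c : Fin n, (F c + G c) := by
    rw [Finset.prod_add F G Finset.univ, ← Finset.powerset_univ]
  rw [hps]
  by_cases hzx : z = x
  · subst hzx
    rw [if_pos rfl]
    have hFG : ∀ c : Fin n, F c + G c = (if c ∈ z then (-1:ℝ) else 1) * (1 - 2*α) := by
      intro c
      by_cases h : c ∈ z <;> simp [hF, hG, h] <;> ring
    rw [Finset.prod_congr rfl (fun c _ => hFG c), Finset.prod_mul_distrib, ← sign_prod,
      Finset.prod_const, Finset.card_univ, Fintype.card_fin]
    rw [← mul_assoc, ← pow_add]
    rw [show (-1:ℝ)^(z.card + z.card) = 1 by rw [← two_mul, pow_mul]; norm_num]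
    rw [one_mul]
  · rw [if_neg hzx]
    have hne : (symmDiff x z).Nonempty := by
      rw [Finset.nonempty_iff_ne_empty]
      intro h
      exact hzx (symmDiff_eq_bot.mp h).symm
    obtain ⟨c, hc⟩ := hne
    rw [Finset.prod_eq_zero (Finset.mem_univ c), mul_zero]
    simp only [Finset.mem_symmDiff] at hc
    rcases hc with ⟨h1, h2⟩ | ⟨h1, h2⟩ <;> simp [hF, hG, h1, h2] <;> ring

lemma collapse {n : ℕ} (gg : Finset (Fin n) → ℝ) :
    ∑ k : Fin (n+1), ∑ y : Finset (Fin n), (if y.card = (k:ℕ) then gg y else 0)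
      = ∑ y : Finset (Fin n), gg y := by
  rw [Finset.sum_comm]
  refine Finset.sum_congr rfl fun y _ => ?_
  have hyn : y.card ≤ n := (Finset.card_le_univ y).trans_eq (by simp)
  rw [Finset.sum_eq_single (⟨y.card, Nat.lt_succ_of_le hyn⟩ : Fin (n+1))]
  · rw [if_pos rfl]
  · intro k _ hk
    exact if_neg fun h => hk (Fin.ext h.symm)
  · intro h; exact absurd (Finset.mem_univ _) h

theorem stmt_7 (n : ℕ) (α : ℝ) (i : Fin (n+1)) :
    (Amat n α * (Matrix.of fun k j : Fin (n+1) => (-1 : ℝ) ^ ((k : ℕ) + (j : ℕ)) * Amat n α k j)) i i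
        = ∑ t ∈ Finset.range (n+1),
            (n.choose t : ℝ) * (-1)^t * α^(2*t) * (1-α)^(2*(n-t)) ∧
      (∑ t ∈ Finset.range (n+1),
            (n.choose t : ℝ) * (-1)^t * α^(2*t) * (1-α)^(2*(n-t))) = (1 - 2*α)^n := by
  have h2 : (∑ t ∈ Finset.range (n+1),
      (n.choose t : ℝ) * (-1)^t * α^(2*t) * (1-α)^(2*(n-t))) = (1 - 2*α)^n := by
    rw [show (1 - 2*α : ℝ) = (-(α^2)) + (1-α)^2 by ring, add_pow]
    refine Finset.sum_congr rfl fun t _ => ?_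
    rw [pow_mul, pow_mul, neg_pow]
    ring
  refine ⟨?_, h2⟩
  rw [h2]
  have hi : (i : ℕ) ≤ n := Nat.lt_succ_iff.mp i.isLt
  obtain ⟨x, -, hx⟩ := Finset.exists_subset_card_eq
    (show (i:ℕ) ≤ (Finset.univ : Finset (Fin n)).card by
      rw [Finset.card_univ, Fintype.card_fin]; exact hi)
  rw [Matrix.mul_apply]
  simp only [Matrix.of_apply]
  have key : ∀ k : Fin (n+1), Amat n α i k * ((-1:ℝ)^((k:ℕ)+(i:ℕ)) * Amat n α k i)
      = ∑ y : Finset (Fin n), (if y.card = (k:ℕ) then Mw n α x y *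
          ((-1:ℝ)^(x.card + y.card) *
            ∑ z : Finset (Fin n), (if z.card = (i:ℕ) then Mw n α y z else 0)) else 0) := by
    intro k
    rw [amat_entry α i k x hx, Finset.sum_mul]
    refine Finset.sum_congr rfl fun y _ => ?_
    by_cases hy : y.card = (k:ℕ)
    · rw [if_pos hy, if_pos hy, amat_entry α k i y hy,
        show (k:ℕ)+(i:ℕ) = x.card + y.card by rw [hx, hy]; omega]
    · rw [if_neg hy, if_neg hy, zero_mul]
  rw [Finset.sum_congr rfl (fun k _ => key k), collapse]
  have swap : ∀ y : Finset (Fin n), Mw n α x y * ((-1:ℝ)^(x.card + y.card) *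
          ∑ z : Finset (Fin n), (if z.card = (i:ℕ) then Mw n α y z else 0))
      = ∑ z : Finset (Fin n), (if z.card = (i:ℕ) then
          (-1:ℝ)^(x.card + y.card) * Mw n α x y * Mw n α y z else 0) := by
    intro y
    rw [Finset.mul_sum, Finset.mul_sum]
    refine Finset.sum_congr rfl fun z _ => ?_
    by_cases hz : z.card = (i:ℕ)
    · rw [if_pos hz, if_pos hz]; ring
    · rw [if_neg hz, if_neg hz, mul_zero, mul_zero]
  rw [Finset.sum_congr rfl (fun y _ => swap y), Finset.sum_comm]
  have final : ∀ z : Finset (Fin n),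
      (∑ y : Finset (Fin n), if z.card = (i:ℕ) then
          (-1:ℝ)^(x.card + y.card) * Mw n α x y * Mw n α y z else 0)
      = if z.card = (i:ℕ) then (if z = x then (1-2*α)^n else 0) else 0 := by
    intro z
    by_cases hz : z.card = (i:ℕ)
    · simp only [hz, if_true]
      exact lemB α x z
    · simp only [hz, if_false]
      exact Finset.sum_const_zero
  rw [Finset.sum_congr rfl (fun z _ => final z)]
  rw [Finset.sum_eq_single x]
  · rw [if_pos hx, if_pos rfl]
  · intro z _ hzx
    by_cases hz : z.card = (i:ℕ)
    · rw [if_pos hz, if_neg hzx]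
    · rw [if_neg hz]
  · intro h; exact absurd (Finset.mem_univ _) h
end

section
/- The off-diagonal entries of Aₙ·Aₙ* vanish: for i ≠ j, ∑_{k=1}^{n+1} Aₙ(i,k)·(-1)^{k+j}·Aₙ(k,j) = 0. -/
open Finset Polynomial

lemma key {R : Type*} [CommRing R] (a b u v : R) {n i : ℕ} (hi : i ≤ n) :
    ∑ k ∈ Finset.range (n+1),
      (∑ s ∈ Finset.Icc (i - k) (min (n - k) i),
        (i.choose s : R) * ((n - i).choose (k + s - i) : R)
          * a ^ (k + 2*s - i) * b ^ (n - (k + 2*s - i)))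
        * u ^ k * v ^ (n - k)
    = (a*v + b*u)^i * (a*u + b*v)^(n-i) := by
  rw [add_pow, add_pow, sum_mul_sum]
  simp only [sum_mul]
  rw [sum_sigma', sum_sigma']
  refine Finset.sum_nbij' (fun p => ⟨p.2, p.1 + p.2 - i⟩) (fun q => ⟨i - q.1 + q.2, q.1⟩)
    ?_ ?_ ?_ ?_ ?_
  · rintro ⟨k, s⟩ hp
    simp only [mem_sigma, mem_range, mem_Icc, le_min_iff] at hp ⊢
    omega
  · rintro ⟨t, m⟩ hq
    simp only [mem_sigma, mem_range, mem_Icc, le_min_iff] at hq ⊢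
    omega
  · rintro ⟨k, s⟩ hp
    simp only [mem_sigma, mem_range, mem_Icc, le_min_iff] at hp
    dsimp only
    have : i - s + (k + s - i) = k := by omega
    simp [this]
  · rintro ⟨t, m⟩ hq
    simp only [mem_sigma, mem_range, mem_Icc, le_min_iff] at hq
    dsimp only
    have : i - t + m + t - i = m := by omega
    simp [this]
  · rintro ⟨k, s⟩ hp
    simp only [mem_sigma, mem_range, mem_Icc, le_min_iff] at hp
    obtain ⟨hk, hs1, hs2, hs3⟩ := hp
    dsimp only
    have e2 : n - (k + 2*s - i) = (i - s) + (n - i - (k + s - i)) := by omega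
    have e1 : k + 2*s - i = s + (k + s - i) := by omega
    have e3 : k = (i - s) + (k + s - i) := by omega
    have e4 : n - k = s + (n - i - (k + s - i)) := by omega
    rw [e2, e1]
    conv_lhs => rw [show u ^ k = u ^ ((i-s) + (k+s-i)) from by rw [← e3],
      show v ^ (n-k) = v ^ (s + (n - i - (k + s - i))) from by rw [← e4]]
    rw [pow_add, pow_add, pow_add, pow_add, mul_pow, mul_pow, mul_pow, mul_pow]
    ring

/-- The scalar entry function matching `Amat`. -/
noncomputable def entry (n : ℕ) (α : ℝ) (i k : ℕ) : ℝ :=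
  ∑ s ∈ Finset.Icc (i - k) (min (n - k) i),
    (i.choose s : ℝ) * ((n - i).choose (k + s - i) : ℝ)
      * α ^ (k + 2*s - i) * (1 - α) ^ (n - (k + 2*s - i))

lemma key_entry (α : ℝ) {n i : ℕ} (hi : i ≤ n) (u v : ℝ[X]) :
    ∑ k ∈ Finset.range (n+1), C (entry n α i k) * u ^ k * v ^ (n - k)
    = (C α * v + C (1-α) * u)^i * (C α * u + C (1-α) * v)^(n-i) := by
  rw [← key (C α) (C (1-α)) u v hi]
  refine Finset.sum_congr rfl fun k hk => ?_
  congr 1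
  congr 1
  simp only [entry, map_sum, map_mul, map_pow, map_natCast]

lemma Pcoeff (α : ℝ) {n i : ℕ} (hi : i ≤ n) {j : ℕ} (hj : j ≤ n) :
    ((C α + C (1-α) * X : ℝ[X])^i * (C α * X + C (1-α))^(n-i)).coeff j
      = entry n α i j := by
  have h := key_entry α hi X 1
  simp only [mul_one, one_pow] at h
  rw [← h, finset_sum_coeff]
  simp only [mul_assoc, coeff_C_mul, coeff_X_pow]
  rw [Finset.sum_eq_single j]
  · simp
  · intro k hk hkj
    simp [Ne.symm hkj]
  · intro h'
    exact absurd (Finset.mem_range.2 (Nat.lt_succ_of_le hj)) h'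

theorem stmt_8 (n : ℕ) (α : ℝ) (i j : Fin (n+1)) (hij : i ≠ j) :
    ∑ k, Amat n α i k * ((-1 : ℝ) ^ ((k : ℕ) + (j : ℕ)) * Amat n α k j) = 0 := by
  have hA : ∀ (p q : Fin (n+1)), Amat n α p q = entry n α (p : ℕ) (q : ℕ) := fun p q => rfl
  have hi : (i : ℕ) ≤ n := Nat.lt_succ_iff.mp i.isLt
  have hj : (j : ℕ) ≤ n := Nat.lt_succ_iff.mp j.isLt
  have h1 : (C α * (C α * X + C (1-α)) + C (1-α) * (-(C α + C (1-α) * X)) : ℝ[X])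
      = C (2*α-1) * X := by
    have hc : (C (2*α-1) : ℝ[X]) = C α * C α - C (1-α) * C (1-α) := by
      rw [← C_mul, ← C_mul, ← C_sub]; ring_nf
    rw [hc]; ring
  have h2 : (C α * (-(C α + C (1-α) * X)) + C (1-α) * (C α * X + C (1-α)) : ℝ[X])
      = C (1-2*α) := by
    have hc : (C (1-2*α) : ℝ[X]) = C (1-α) * C (1-α) - C α * C α := by
      rw [← C_mul, ← C_mul, ← C_sub]; ring_nf
    rw [hc]; ring
  have hkey := key_entry α hi (-(C α + C (1-α) * X)) (C α * X + C (1-α))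
  rw [h1, h2] at hkey
  have hco := congrArg (fun p : ℝ[X] => p.coeff (j : ℕ)) hkey
  simp only [finset_sum_coeff] at hco
  have hrhs : ((C (2*α-1) * X : ℝ[X]) ^ (i:ℕ) * C (1-2*α) ^ (n - (i:ℕ))).coeff (j : ℕ) = 0 := by
    rw [mul_pow, ← map_pow, ← map_pow, mul_comm ((C ((2*α-1)^(i:ℕ)) : ℝ[X])),
      mul_assoc, ← map_mul, mul_comm, coeff_C_mul, coeff_X_pow,
      if_neg (fun h => hij (Fin.ext h.symm)), mul_zero]
  have hterm : ∀ b ∈ Finset.range (n+1),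
      ((C (entry n α (i:ℕ) b) * (-(C α + C (1-α) * X)) ^ b
        * (C α * X + C (1-α)) ^ (n - b) : ℝ[X])).coeff (j : ℕ)
      = entry n α (i:ℕ) b * ((-1:ℝ)^b * entry n α b (j:ℕ)) := by
    intro b hb
    have hb' : b ≤ n := Nat.lt_succ_iff.mp (Finset.mem_range.mp hb)
    have hrw : (C (entry n α (i:ℕ) b) * (-(C α + C (1-α) * X)) ^ b
        * (C α * X + C (1-α)) ^ (n - b) : ℝ[X])
        = C (entry n α (i:ℕ) b * (-1:ℝ)^b)
          * ((C α + C (1-α) * X) ^ b * (C α * X + C (1-α)) ^ (n - b)) := by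
      rw [neg_pow, map_mul, map_pow, map_neg, map_one]; ring
    rw [hrw, coeff_C_mul, Pcoeff α hb' hj, mul_assoc]
  rw [Finset.sum_congr rfl hterm, hrhs] at hco
  calc ∑ k : Fin (n+1), Amat n α i k * ((-1 : ℝ) ^ ((k : ℕ) + (j : ℕ)) * Amat n α k j)
      = ∑ m ∈ Finset.range (n+1),
          entry n α (i:ℕ) m * ((-1:ℝ)^(m + (j:ℕ)) * entry n α m (j:ℕ)) := by
        rw [← Fin.sum_univ_eq_sum_range]
        exact Finset.sum_congr rfl fun k _ => by rw [hA, hA]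
    _ = (-1:ℝ)^(j:ℕ) * ∑ m ∈ Finset.range (n+1),
          entry n α (i:ℕ) m * ((-1:ℝ)^m * entry n α m (j:ℕ)) := by
        rw [Finset.mul_sum]
        refine Finset.sum_congr rfl fun m _ => ?_
        rw [pow_add]; ring
    _ = 0 := by rw [hco, mul_zero]
end

section
/- For n independent binary channels each flipping with probability α, the probability of transitioning from a configuration with i-1 ones to a configuration with j-1 ones equals Aₙ(i,j) = ∑_{s=max(i-j,0)}^{min(n+1-j,i-1)} C(i-1,s)·C(n+1-i,j-i+s)·α^{j-i+2s}·(1-α)^{n-(j-i+2s)}. Formally: for any fixed x ∈ {0,1}^n with exactly i-1 ones, ∑_{y : |y|₁ = j-1} α^{d(x,y)}·(1-α)^{n-d(x,y)} = Aₙ(i,j), where d is the Hamming distance. -/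
/-- number of ones of a binary string -/
def ones {n : ℕ} (x : Fin n → Bool) : ℕ := (Finset.univ.filter fun p => x p = true).card

/-- Hamming distance -/
def hd {n : ℕ} (x y : Fin n → Bool) : ℕ := (Finset.univ.filter fun p => x p ≠ y p).card

open Finset

section Counting

variable {ι : Type*} [DecidableEq ι]

lemma card_sdiff_add_card_sdiff (S T : Finset ι) :
    #(S \ T) + #(T \ S) = #T + 2 * #(S \ T) - #S := by
  have hS := card_sdiff_add_card_inter S T
  have hT := card_sdiff_add_card_inter T S
  rw [inter_comm] at hT
  omega

variable [Fintype ι]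

lemma card_filter_powersetCard_card_sdiff (S : Finset ι) {k s : ℕ} (h : #S ≤ k + s) :
    #{T ∈ powersetCard k univ | #(S \ T) = s} =
      (#S).choose s * (Fintype.card ι - #S).choose (k + s - #S) := by
  rw [← card_compl, ← card_powersetCard, ← card_powersetCard, ← card_product]
  have hinv {A B : Finset ι} (hA : A ⊆ S) (hB : Disjoint B S) :
      S \ (S \ A ∪ B) = A ∧ (S \ A ∪ B) \ S = B := by
    constructor <;> ext a <;> grind [disjoint_left]
  refine card_nbij' (fun T => (S \ T, T \ S)) (fun P => (S \ P.1) ∪ P.2) ?_ ?_ ?_ ?_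
  · intro T hT
    simp only [coe_filter, mem_powersetCard, Set.mem_ofPred_eq, coe_product, Set.mem_prod, mem_coe]
      at hT ⊢
    have := card_sdiff_add_card_sdiff S T
    refine ⟨⟨sdiff_subset, hT.2⟩, fun a ha => mem_compl.2 (mem_sdiff.1 ha).2, by omega⟩
  · rintro ⟨A, B⟩ hP
    simp only [coe_product, Set.mem_prod, mem_coe, mem_powersetCard,
      subset_compl_iff_disjoint_right] at hP
    obtain ⟨⟨hAS, hA⟩, hBS, hB⟩ := hP
    have hcard : #(S \ A ∪ B) = k := by
      rw [card_union_of_disjoint (disjoint_of_subset_left sdiff_subset hBS.symm),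
        card_sdiff_of_subset hAS]
      have := card_le_card hAS
      omega
    simp [hcard, (hinv hAS hBS).1, hA]
  · intro T _
    ext a
    simp only [mem_union, mem_sdiff]
    tauto
  · rintro ⟨A, B⟩ hP
    simp only [coe_product, Set.mem_prod, mem_coe, mem_powersetCard,
      subset_compl_iff_disjoint_right] at hP
    simp only [hinv hP.1.1 hP.2.1]

lemma sum_powersetCard_eq_sum_card_sdiff {M : Type*} [AddCommMonoid M] (S : Finset ι) (k : ℕ)
    (f : ℕ → M) :
    ∑ T ∈ powersetCard k univ, f #(S \ T) =
      ∑ s ∈ Icc (#S - k) (min (Fintype.card ι - k) #S),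
        ((#S).choose s * (Fintype.card ι - #S).choose (k + s - #S)) • f s := by
  have hmaps : ∀ T ∈ powersetCard k univ,
      #(S \ T) ∈ Icc (#S - k) (min (Fintype.card ι - k) #S) := by
    intro T hT
    have hTk := (mem_powersetCard.1 hT).2
    have hlow := card_sdiff_add_card_inter S T
    have hinter : #(S ∩ T) ≤ #T := card_le_card inter_subset_right
    have hcompl : #(S \ T) ≤ #Tᶜ := card_le_card fun a ha => mem_compl.2 (mem_sdiff.1 ha).2
    have hsub : #(S \ T) ≤ #S := card_le_card sdiff_subset
    rw [card_compl] at hcompl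
    simp only [mem_Icc, le_min_iff]
    omega
  rw [← sum_fiberwise_of_maps_to hmaps]
  refine sum_congr rfl fun s hs => ?_
  rw [sum_congr rfl fun T hT => congrArg f (mem_filter.1 hT).2, sum_const,
    card_filter_powersetCard_card_sdiff S (by simp only [mem_Icc] at hs; omega)]

end Counting

section BinaryStrings

variable {n : ℕ}

def onesSet (y : Fin n → Bool) : Finset (Fin n) := {p | y p = true}

lemma hd_eq_card_sdiff_add_card_sdiff (x y : Fin n → Bool) :
    hd x y = #(onesSet x \ onesSet y) + #(onesSet y \ onesSet x) := by
  rw [hd, ← card_union_of_disjoint disjoint_sdiff_sdiff]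
  congr 1
  ext p
  simp only [mem_filter, mem_univ, true_and, mem_union, mem_sdiff, onesSet]
  cases x p <;> cases y p <;> decide

lemma sum_filter_ones_eq_sum_powersetCard {M : Type*} [AddCommMonoid M] (k : ℕ)
    (g : Finset (Fin n) → M) :
    ∑ y ∈ univ.filter (fun y : Fin n → Bool => ones y = k), g (onesSet y) =
      ∑ T ∈ powersetCard k univ, g T := by
  refine sum_nbij' onesSet (fun T p => decide (p ∈ T)) ?_ ?_ ?_ ?_ fun _ _ => rfl
  · intro y hy
    exact mem_powersetCard.2 ⟨subset_univ _, (mem_filter.1 hy).2⟩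
  · intro T hT
    refine mem_filter.2 ⟨mem_univ _, ?_⟩
    simpa [ones] using (mem_powersetCard.1 hT).2
  · intro y _
    funext p
    simp [onesSet]
  · intro T _
    ext p
    simp [onesSet]

end BinaryStrings

theorem stmt_10 (n : ℕ) (α : ℝ) (i j : Fin (n+1)) (x : Fin n → Bool)
    (hx : ones x = (i : ℕ)) :
    ∑ y ∈ Finset.univ.filter (fun y : Fin n → Bool => ones y = (j : ℕ)),
        α ^ hd x y * (1 - α) ^ (n - hd x y) = Amat n α i j := by
  set w : ℕ → ℝ := fun d => α ^ d * (1 - α) ^ (n - d)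
  set S := onesSet x
  have hS : #S = i := hx
  calc _ = ∑ T ∈ powersetCard j univ, w (#(S \ T) + #(T \ S)) := by
        simp only [hd_eq_card_sdiff_add_card_sdiff]
        exact sum_filter_ones_eq_sum_powersetCard j fun T => w (#(S \ T) + #(T \ S))
    _ = ∑ T ∈ powersetCard j univ, w (j + 2 * #(S \ T) - i) :=
        sum_congr rfl fun T hT => by rw [card_sdiff_add_card_sdiff, (mem_powersetCard.1 hT).2, hS]
    _ = Amat n α i j := by
        rw [sum_powersetCard_eq_sum_card_sdiff S j (fun s => w (j + 2 * s - i))]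
        simp only [Amat, Matrix.of_apply, hS, Fintype.card_fin, nsmul_eq_mul, Nat.cast_mul, w,
          mul_assoc]
end

section
/- Signed sum vanishing: for x, z ∈ {0,1}^n with x ≠ z, ∑_{y ∈ {0,1}^n} (-1)^{|y|₁} · α^{d(x,y)} (1-α)^{n-d(x,y)} · α^{d(y,z)} (1-α)^{n-d(y,z)} = 0 for every real α. -/
lemma hd_prod {n : ℕ} (α : ℝ) (x y : Fin n → Bool) :
    α ^ hd x y * (1 - α) ^ (n - hd x y) =
      ∏ i, (if x i = y i then (1 - α) else α) := by
  classical
  rw [← Finset.prod_filter_mul_prod_filter_not Finset.univ (fun i => x i = y i)]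
  have hfil : (Finset.univ.filter fun i => ¬ x i = y i)
      = (Finset.univ.filter fun p => x p ≠ y p) :=
    Finset.filter_congr (fun i _ => by simp [Ne])
  have h1 : (∏ i ∈ Finset.univ.filter fun i => x i = y i, if x i = y i then (1-α) else α)
      = (1 - α) ^ (n - hd x y) := by
    rw [Finset.prod_eq_pow_card (fun i hi => by
      simp only [Finset.mem_filter] at hi; rw [if_pos hi.2])]
    congr 1
    have h := Finset.card_filter_add_card_filter_not (s := Finset.univ)
      (p := fun i => x i = y i)
    simp only [Finset.card_univ, Fintype.card_fin] at h
    rw [hfil] at h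
    unfold hd
    omega
  have h2 : (∏ i ∈ Finset.univ.filter fun i => ¬ x i = y i, if x i = y i then (1-α) else α)
      = α ^ hd x y := by
    rw [Finset.prod_eq_pow_card (fun i hi => by
      simp only [Finset.mem_filter] at hi; rw [if_neg hi.2]), hfil]
    rfl
  rw [h1, h2, mul_comm]

lemma ones_prod {n : ℕ} (y : Fin n → Bool) :
    ((-1 : ℝ)) ^ ones y = ∏ i, (if y i then (-1:ℝ) else 1) := by
  classical
  rw [← Finset.prod_filter_mul_prod_filter_not Finset.univ (fun i => y i = true)]
  have h2 : (∏ i ∈ Finset.univ.filter fun i => ¬ y i = true, if y i then (-1:ℝ) else 1) = 1 :=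
    Finset.prod_eq_one fun i hi => by
      simp only [Finset.mem_filter] at hi; simp [hi.2]
  have h1 : (∏ i ∈ Finset.univ.filter fun i => y i = true, if y i then (-1:ℝ) else 1)
      = (-1 : ℝ) ^ ones y := by
    rw [Finset.prod_eq_pow_card (b := (-1:ℝ)) (fun i hi => by
      simp only [Finset.mem_filter] at hi; simp [hi.2])]
    rfl
  rw [h1, h2, mul_one]

theorem stmt_16 (n : ℕ) (α : ℝ) (x z : Fin n → Bool) (hxz : x ≠ z) :
    ∑ y : Fin n → Bool,
        (-1 : ℝ) ^ ones y * (α ^ hd x y * (1 - α) ^ (n - hd x y)) *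
          (α ^ hd y z * (1 - α) ^ (n - hd y z)) = 0 := by
  classical
  have key : ∀ y : Fin n → Bool,
      (-1 : ℝ) ^ ones y * (α ^ hd x y * (1 - α) ^ (n - hd x y)) *
          (α ^ hd y z * (1 - α) ^ (n - hd y z)) =
        ∏ i, ((if y i then (-1:ℝ) else 1) * (if x i = y i then (1-α) else α) *
          (if y i = z i then (1-α) else α)) := by
    intro y
    rw [ones_prod, hd_prod, hd_prod, Finset.prod_mul_distrib, Finset.prod_mul_distrib]
  rw [Finset.sum_congr rfl (fun y _ => key y), ← Fintype.prod_sum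
    (f := fun i (b : Bool) => (if b then (-1:ℝ) else 1) * (if x i = b then (1-α) else α) *
      (if b = z i then (1-α) else α))]
  obtain ⟨i, hi⟩ : ∃ i, x i ≠ z i := by
    by_contra h
    push_neg at h
    exact hxz (funext h)
  apply Finset.prod_eq_zero (Finset.mem_univ i)
  rw [Fintype.sum_bool]
  cases hx : x i <;> cases hz : z i <;> simp_all <;> ring
end
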